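/- The mean of f(x) = ||x - x_start||₂ + ||x_goal - x||₂ over a uniform distribution on the prolate hyperspheroid {x ∈ R^n : f(x) < c_i} equals (n·c_i² + c_min²) / ((n+1)·c_i), where c_min = ||x_goal - x_start||₂. -/

import Mathlib

/-!
After moving the midpoint of the foci to the origin, the region `{f < c}` is the spheroid with
semi-axis `c / 2` along `x_goal - x_start` and `√(c² - c_min²) / 2` across it, the preimage of the
unit ball under a linear map; so its volume is `V(c) = κ (c / 2) (√(c² - c_min²) / 2) ^ (n - 1)`
with `κ` the volume of the unit ball. The layer-cake formula applied to `c_i - f ≥ 0` gives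
`∫_{f < c_i} f = c_i V(c_i) - ∫_{c_min}^{c_i} V(s) ds`, and `s ↦ V(s)` has the elementary
antiderivative `κ √(s² - c_min²) ^ (n + 1) / ((n + 1) 2 ^ n)`.
-/

open MeasureTheory Metric Module Set Filter
open scoped RealInnerProductSpace

theorem integral_mul_sqrt_sq_sub_sq_pow {m c : ℝ} (hm : 0 ≤ m) (hmc : m ≤ c) (k : ℕ) :
    ∫ s in m..c, s * √(s ^ 2 - m ^ 2) ^ k = √(c ^ 2 - m ^ 2) ^ (k + 2) / (k + 2) := by
  have hderiv : ∀ s ∈ Ioo m c, HasDerivAt (fun s => √(s ^ 2 - m ^ 2) ^ (k + 2) / (k + 2))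
      (s * √(s ^ 2 - m ^ 2) ^ k) s := by
    intro s hs
    have hpos : 0 < s ^ 2 - m ^ 2 := by nlinarith [hs.1, hs.2]
    have hsqrt := ((hasDerivAt_pow 2 s).sub_const (m ^ 2)).sqrt hpos.ne'
    refine ((hsqrt.fun_pow (k + 2)).div_const ((k : ℝ) + 2)).congr_deriv ?_
    have : √(s ^ 2 - m ^ 2) ≠ 0 := (Real.sqrt_pos.mpr hpos).ne'
    rw [show k + 2 - 1 = k + 1 from rfl, pow_succ]
    push_cast
    field_simp
  rw [intervalIntegral.integral_eq_sub_of_hasDerivAt_of_le hmc _ hderiv]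
  · simp
  · apply Continuous.intervalIntegrable
    fun_prop
  · apply Continuous.continuousOn
    fun_prop

theorem setIntegral_lt_eq_sub_integral_measureReal_lt {α : Type*} [MeasurableSpace α]
    (μ : Measure α) {g : α → ℝ} (hg : Measurable g) {m c : ℝ} (hm : ∀ x, m ≤ g x)
    (hmc : m ≤ c) (hfin : μ {x | g x < c} ≠ ⊤) :
    ∫ x in {x | g x < c}, g x ∂μ =
      c * μ.real {x | g x < c} - ∫ s in m..c, μ.real {x | g x < s} := by
  set S := {x | g x < c}
  have hS : MeasurableSet S := measurableSet_lt hg measurable_const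
  have : IsFiniteMeasure (μ.restrict S) :=
    ⟨by rwa [Measure.restrict_apply_univ, lt_top_iff_ne_top]⟩
  have hint : Integrable g (μ.restrict S) :=
    Integrable.of_bound hg.aestronglyMeasurable (max |m| |c|) <| (ae_restrict_iff' hS).mpr <|
      Eventually.of_forall fun x (hx : g x < c) => abs_le_max_abs_abs (hm x) hx.le
  have hlayer : ∫ x in S, (c - g x) ∂μ = ∫ t in Ioi 0, μ.real {x | g x < c - t} := by
    rw [Integrable.integral_eq_integral_meas_lt (f := fun x => c - g x)
      ((integrable_const c).sub hint) ((ae_restrict_iff' hS).mpr <|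
        Eventually.of_forall fun x (hx : g x < c) => sub_nonneg.mpr hx.le)]
    refine setIntegral_congr_fun measurableSet_Ioi fun t (ht : 0 < t) => ?_
    have hset : {x | t < c - g x} ∩ S = {x | g x < c - t} := by
      ext x
      simp only [mem_inter_iff, mem_ofPred_eq, S]
      exact ⟨fun h => by linarith [h.1], fun h => ⟨by linarith, by linarith⟩⟩
    rw [measureReal_restrict_apply' hS, hset]
  have htail : ∫ t in Ioi 0, μ.real {x | g x < c - t} =
      ∫ t in Ioc 0 (c - m), μ.real {x | g x < c - t} := by
    refine setIntegral_eq_of_subset_of_forall_sdiff_eq_zero measurableSet_Ioi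
      Ioc_subset_Ioi_self fun t ⟨ht, hmt⟩ => ?_
    have hmt : c - t < m := by simp only [mem_Ioc, not_and, not_le] at hmt; linarith [hmt ht]
    have : {x | g x < c - t} = ∅ :=
      eq_empty_of_forall_notMem fun x (hx : g x < c - t) => (hx.trans hmt).not_ge (hm x)
    simp [this]
  rw [integral_sub (integrable_const c) hint, setIntegral_const, smul_eq_mul, mul_comm, htail,
    ← intervalIntegral.integral_of_le (by linarith),
    intervalIntegral.integral_comp_sub_left (fun s => μ.real {x | g x < s}), sub_sub_cancel,
    sub_zero] at hlayer
  linarith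

theorem add_lt_two_mul_iff_of_sq_eq {A B a k d : ℝ} (hA : 0 ≤ A) (hB : 0 ≤ B)
    (hA2 : A ^ 2 = (a - k) ^ 2 + d) (hB2 : B ^ 2 = (a + k) ^ 2 + d) (hk : d < 0 → |k| < a) :
    A + B < 2 * a ↔ d < 0 := by
  constructor
  · intro h
    by_contra! hd
    have : a - k ≤ A := (abs_le_of_sq_le_sq' (by nlinarith) hA).2
    have : a + k ≤ B := (abs_le_of_sq_le_sq' (by nlinarith) hB).2
    linarith
  · intro hd
    obtain ⟨hk₁, hk₂⟩ := abs_lt.mp (hk hd)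
    have : A < a - k := by nlinarith
    have : B < a + k := by nlinarith
    linarith

theorem exists_norm_eq_one_and_norm_smul_eq {F : Type*} [NormedAddCommGroup F] [NormedSpace ℝ F]
    [Nontrivial F] (v : F) : ∃ u : F, ‖u‖ = 1 ∧ ‖v‖ • u = v := by
  rcases eq_or_ne v 0 with rfl | hv
  · obtain ⟨u, hu⟩ := exists_norm_eq F zero_le_one
    exact ⟨u, hu, by simp⟩
  · exact ⟨‖v‖⁻¹ • v, norm_smul_inv_norm hv, smul_inv_smul₀ (norm_ne_zero_iff.mpr hv) v⟩

section Spheroid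

variable {E : Type*} [NormedAddCommGroup E] [InnerProductSpace ℝ E]

def spheroid (u : E) (a b : ℝ) : Set E :=
  {y | ⟪u, y⟫ ^ 2 / a ^ 2 + (‖y‖ ^ 2 - ⟪u, y⟫ ^ 2) / b ^ 2 < 1}

theorem norm_sub_add_norm_add_lt_iff_mem_spheroid {u : E} (hu : ‖u‖ = 1) {a b f : ℝ}
    (ha : 0 < a) (hb : 0 < b) (habf : a ^ 2 = b ^ 2 + f ^ 2) (y : E) :
    ‖y - f • u‖ + ‖y + f • u‖ < 2 * a ↔ y ∈ spheroid u a b := by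
  set Y := ⟪u, y⟫
  have hY : Y ^ 2 ≤ ‖y‖ ^ 2 := by
    simpa [hu, sq_abs] using pow_le_pow_left₀ (abs_nonneg _) (abs_real_inner_le_norm u y) 2
  have hsub : ‖y - f • u‖ ^ 2 = ‖y‖ ^ 2 - 2 * f * Y + f ^ 2 := by
    rw [norm_sub_sq_real, inner_smul_right, real_inner_comm, norm_smul, mul_pow, hu,
      Real.norm_eq_abs, sq_abs]
    ring
  have hadd : ‖y + f • u‖ ^ 2 = ‖y‖ ^ 2 + 2 * f * Y + f ^ 2 := by
    rw [norm_add_sq_real, inner_smul_right, real_inner_comm, norm_smul, mul_pow, hu,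
      Real.norm_eq_abs, sq_abs]
    ring
  have hmem : y ∈ spheroid u a b ↔ ‖y‖ ^ 2 + f ^ 2 - a ^ 2 - (f * Y / a) ^ 2 < 0 := by
    simp only [spheroid, mem_ofPred_eq]
    rw [div_add_div _ _ (by positivity) (by positivity), div_lt_one (by positivity)]
    constructor <;> intro h <;> field_simp at * <;> nlinarith
  rw [hmem]
  -- `‖y ∓ f • u‖² = (a ∓ k)² + d` with `k = f ⟪u, y⟫ / a`, and `d < 0` is the spheroid inequality
  refine add_lt_two_mul_iff_of_sq_eq (k := f * Y / a) (norm_nonneg _) (norm_nonneg _) ?_ ?_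
    fun hd => ?_
  · rw [hsub]; field_simp; ring
  · rw [hadd]; field_simp; ring
  · have hYa : Y ^ 2 < a ^ 2 := by
      field_simp at hd
      nlinarith
    refine abs_lt_of_sq_lt_sq ?_ ha.le
    rw [div_pow, div_lt_iff₀ (by positivity)]
    nlinarith

variable [FiniteDimensional ℝ E] [MeasurableSpace E] [BorelSpace E]
  (μ : Measure E) [μ.IsAddHaarMeasure]

theorem addHaar_spheroid {u : E} (hu : ‖u‖ = 1) {a b : ℝ} (ha : 0 < a) (hb : 0 < b) :
    μ (spheroid u a b) = ENNReal.ofReal (a * b ^ (finrank ℝ E - 1)) * μ (ball 0 1) := by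
  -- `L` scales by `a⁻¹` along `u` and by `b⁻¹` orthogonally to `u`
  set L : E →ₗ[ℝ] E := b⁻¹ • LinearMap.transvection ((b / a - 1) • innerₗ E u) u
  have hL : ∀ y, ‖L y‖ ^ 2 = ⟪u, y⟫ ^ 2 / a ^ 2 + (‖y‖ ^ 2 - ⟪u, y⟫ ^ 2) / b ^ 2 := by
    intro y
    simp only [L, LinearMap.smul_apply, LinearMap.transvection.apply, innerₗ_apply_apply,
      smul_eq_mul]
    rw [norm_smul, mul_pow, norm_add_sq_real, inner_smul_right, norm_smul, mul_pow, hu,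
      Real.norm_eq_abs, Real.norm_eq_abs, sq_abs, sq_abs, real_inner_comm]
    field_simp
    ring
  have hdet : LinearMap.det L = b / a * b⁻¹ ^ finrank ℝ E := by
    rw [LinearMap.det_smul, LinearMap.transvection.det, LinearMap.smul_apply, innerₗ_apply_apply,
      real_inner_self_eq_norm_sq, hu, smul_eq_mul]
    ring
  have hset : spheroid u a b = L ⁻¹' ball 0 1 := by
    ext y
    rw [mem_preimage, mem_ball_zero_iff, ← sq_lt_one_iff₀ (norm_nonneg _), hL]
    rfl
  have hrank : 0 < finrank ℝ E :=
    finrank_pos_iff_exists_ne_zero.mpr ⟨u, norm_ne_zero_iff.mp (by simp [hu])⟩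
  obtain ⟨k, hk⟩ := Nat.exists_eq_add_of_lt hrank
  rw [hset, Measure.addHaar_preimage_linearMap μ (by rw [hdet]; positivity), hdet, hk,
    abs_of_pos (by positivity), zero_add, Nat.add_sub_cancel, inv_pow, pow_succ]
  field_simp

variable [Nontrivial E]

theorem addHaar_dist_add_dist_lt (x₁ x₂ : E) {c : ℝ} (hc : dist x₂ x₁ < c) :
    μ {x | dist x x₁ + dist x₂ x < c} =
      ENNReal.ofReal (c / 2 * (√(c ^ 2 - dist x₂ x₁ ^ 2) / 2) ^ (finrank ℝ E - 1)) *
        μ (ball 0 1) := by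
  obtain ⟨u, hu, hx₂₁⟩ := exists_norm_eq_one_and_norm_smul_eq (x₂ - x₁)
  have hc₀ : 0 < c := dist_nonneg.trans_lt hc
  have hsq : 0 < c ^ 2 - dist x₂ x₁ ^ 2 := by nlinarith [dist_nonneg (x := x₂) (y := x₁)]
  set f := dist x₂ x₁ / 2
  set b := √(c ^ 2 - dist x₂ x₁ ^ 2) / 2
  have hb : 0 < b := by positivity
  have habf : (c / 2) ^ 2 = b ^ 2 + f ^ 2 := by
    simp only [b, f]
    rw [div_pow, div_pow, Real.sq_sqrt hsq.le]
    ring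
  have hx₂ : x₂ = x₁ + (2 * f) • u := by
    rw [mul_div_cancel₀ _ two_ne_zero, dist_eq_norm, hx₂₁, add_sub_cancel]
  have hset : {x | dist x x₁ + dist x₂ x < c} =
      (· + -(x₁ + f • u)) ⁻¹' spheroid u (c / 2) b := by
    ext x
    have h₁ : x - x₁ = x + -(x₁ + f • u) + f • u := by abel
    have h₂ : x - x₂ = x + -(x₁ + f • u) - f • u := by rw [hx₂]; module
    rw [mem_preimage, ← norm_sub_add_norm_add_lt_iff_mem_spheroid hu (by positivity) hb habf,
      ← h₁, ← h₂, mem_ofPred_eq, dist_eq_norm, dist_comm, dist_eq_norm, add_comm,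
      mul_div_cancel₀ _ two_ne_zero]
  rw [hset, measure_preimage_add_right, addHaar_spheroid μ hu (by positivity) hb]

theorem measureReal_dist_add_dist_lt {k : ℕ} (hk : finrank ℝ E = k + 1) (x₁ x₂ : E) {c : ℝ}
    (hc : dist x₂ x₁ < c) :
    μ.real {x | dist x x₁ + dist x₂ x < c} =
      μ.real (ball 0 1) / 2 ^ (k + 1) * (c * √(c ^ 2 - dist x₂ x₁ ^ 2) ^ k) := by
  rw [measureReal_def, addHaar_dist_add_dist_lt μ x₁ x₂ hc, ENNReal.toReal_mul,
    ENNReal.toReal_ofReal (by positivity [dist_nonneg.trans_lt hc]), hk, Nat.add_sub_cancel,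
    ← measureReal_def, div_pow]
  field_simp
  ring

theorem integral_measureReal_dist_add_dist_lt {k : ℕ} (hk : finrank ℝ E = k + 1) (x₁ x₂ : E)
    {c : ℝ} (hc : dist x₂ x₁ ≤ c) :
    ∫ s in dist x₂ x₁..c, μ.real {x | dist x x₁ + dist x₂ x < s} =
      μ.real (ball 0 1) / 2 ^ (k + 1) * (√(c ^ 2 - dist x₂ x₁ ^ 2) ^ (k + 2) / (k + 2)) := by
  rw [intervalIntegral.integral_congr_ae (Eventually.of_forall fun s hs =>
      measureReal_dist_add_dist_lt μ hk x₁ x₂ (by rw [uIoc_of_le hc] at hs; exact hs.1)),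
    intervalIntegral.integral_const_mul, integral_mul_sqrt_sq_sub_sq_pow dist_nonneg hc]

end Spheroid

theorem phs_mean_cost_general (n : ℕ) (hn : 2 ≤ n) (xs xg : EuclideanSpace ℝ (Fin n))
    (ci : ℝ) (hci : dist xg xs < ci) :
    (∫ x in {x : EuclideanSpace ℝ (Fin n) | dist x xs + dist xg x < ci},
        (dist x xs + dist xg x)) /
      (volume {x : EuclideanSpace ℝ (Fin n) | dist x xs + dist xg x < ci}).toReal =
      ((n : ℝ) * ci ^ 2 + (dist xg xs) ^ 2) / (((n : ℝ) + 1) * ci) := by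
  obtain ⟨k, rfl⟩ : ∃ k, n = k + 1 := ⟨n - 1, by omega⟩
  have hk : finrank ℝ (EuclideanSpace ℝ (Fin (k + 1))) = k + 1 := finrank_euclideanSpace_fin
  have hfin : volume {x | dist x xs + dist xg x < ci} ≠ ⊤ := by
    rw [addHaar_dist_add_dist_lt volume xs xg hci]
    exact ENNReal.mul_ne_top ENNReal.ofReal_ne_top measure_ball_lt_top.ne
  rw [setIntegral_lt_eq_sub_integral_measureReal_lt volume (by fun_prop)
      (fun x => (dist_triangle xg x xs).trans_eq (add_comm _ _)) hci.le hfin,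
    integral_measureReal_dist_add_dist_lt volume hk xs xg hci.le, ← measureReal_def,
    measureReal_dist_add_dist_lt volume hk xs xg hci]
  have hci₀ : 0 < ci := dist_nonneg.trans_lt hci
  have hsq : 0 < ci ^ 2 - dist xg xs ^ 2 := by nlinarith [dist_nonneg (x := xg) (y := xs)]
  have hκ : 0 < volume.real (ball (0 : EuclideanSpace ℝ (Fin (k + 1))) 1) :=
    ENNReal.toReal_pos (measure_ball_pos volume 0 one_pos).ne' measure_ball_lt_top.ne
  have hD : 0 < √(ci ^ 2 - dist xg xs ^ 2) := Real.sqrt_pos.mpr hsq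
  rw [pow_add (√_) k 2, Real.sq_sqrt hsq.le]
  push_cast
  field_simp
  ring

/-- The mean of `f(x) = ‖x - x_start‖ + ‖x_goal - x‖` over the uniform distribution on the
prolate hyperspheroid `{x | f(x) < c_i}` equals `(n c_i² + c_min²)/((n+1) c_i)`. -/
theorem phs_mean_cost (n : ℕ) (hn : 2 ≤ n) (xs xg : EuclideanSpace ℝ (Fin n))
    (hne : xs ≠ xg) (ci : ℝ) (hci : dist xg xs < ci) :
    (∫ x in {x : EuclideanSpace ℝ (Fin n) | dist x xs + dist xg x < ci},
        (dist x xs + dist xg x)) /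
      (volume {x : EuclideanSpace ℝ (Fin n) | dist x xs + dist xg x < ci}).toReal =
      ((n : ℝ) * ci ^ 2 + (dist xg xs) ^ 2) / (((n : ℝ) + 1) * ci) :=
  phs_mean_cost_general n hn xs xg ci hci
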